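/- arXiv:2601.05335 — 4 statements merged into one kernel-verified Lean document; each statement's English description precedes it below -/
import Mathlib

section
/- Let X be an N-way real tensor of size I_1 × ⋯ × I_N, let σ : {1,…,N} → {1,…,K} be a cell map with cell dimensions Ĩ_1,…,Ĩ_K satisfying I_n = Ĩ_{σ(n)}, let λ ∈ ℝ^r and A_k ∈ ℝ^{Ĩ_k × r} for k ∈ {1,…,K}, and let M be the symmetric Kruskal tensor with entries m_i = ∑_{j=1}^r λ_j ∏_{n=1}^N (A_{σ(n)})_{i_n, j}. Let ℓ : ℝ × ℝ → ℝ be such that for every x ∈ ℝ the map m ↦ ℓ(x, m) is differentiable on ℝ with derivative ∂ℓ/∂m(x, m), and define the objective F(λ, A_1,…,A_K) = ∑_i ℓ(x_i, m_i), the sum running over all multi-indices. Then for every b ∈ {1,…,r}, the partial derivative of F with respect to the weight λ_b exists at (λ, A_1,…,A_K) and equals ∑_i y_i ∏_{n=1}^N (A_{σ(n)})_{i_n, b}, where y_i = ∂ℓ/∂m(x_i, m_i). -/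
open Finset

theorem hasDerivAt_sum_update_mul {𝕜 ι : Type*} [NontriviallyNormedField 𝕜] [Fintype ι]
    [DecidableEq ι] (v c : ι → 𝕜) (b : ι) (t : 𝕜) :
    HasDerivAt (fun s => ∑ j, Function.update v b s j * c j) (c b) t := by
  have hsum := HasDerivAt.fun_sum (u := univ) fun j _ =>
    (hasDerivAt_pi.mp (hasDerivAt_update v b t) j).mul_const (c j)
  simpa [Pi.single_apply] using hsum

/-- **SymGCP gradient with respect to the weights.**
For the SymGCP objective `F(λ) = ∑_i ℓ(x_i, m_i)` with the symmetric Kruskal model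
`m_i = ∑_j λ_j ∏_n (A_{σ(n)})_{i_n, j}`, the partial derivative with respect to `λ_b`
exists and equals `∑_i y_i ∏_n (A_{σ(n)})_{i_n, b}` where `y_i = ∂ℓ/∂m (x_i, m_i)`. -/
theorem symgcp_gradient_lambda
    (N K r : ℕ) (σ : Fin N → Fin K) (Itil : Fin K → ℕ)
    (X : ((n : Fin N) → Fin (Itil (σ n))) → ℝ)
    (lam : Fin r → ℝ) (A : (k : Fin K) → Fin (Itil k) → Fin r → ℝ)
    (ℓ : ℝ → ℝ → ℝ) (dℓ : ℝ → ℝ → ℝ)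
    (hℓ : ∀ x m : ℝ, HasDerivAt (fun z => ℓ x z) (dℓ x m) m)
    (b : Fin r) :
    HasDerivAt
      (fun t : ℝ => ∑ i : (n : Fin N) → Fin (Itil (σ n)),
        ℓ (X i) (∑ j : Fin r, Function.update lam b t j * ∏ n : Fin N, A (σ n) (i n) j))
      (∑ i : (n : Fin N) → Fin (Itil (σ n)),
        dℓ (X i) (∑ j : Fin r, lam j * ∏ n : Fin N, A (σ n) (i n) j) *
          ∏ n : Fin N, A (σ n) (i n) b)
      (lam b) := by
  refine HasDerivAt.fun_sum fun i _ => ?_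
  have hmodel := hasDerivAt_sum_update_mul lam (fun j => ∏ n, A (σ n) (i n) j) b (lam b)
  simpa only [Function.update_eq_self, Function.comp_def] using (hℓ (X i) _).comp (lam b) hmodel
end

section
/- Let X be an N-way real tensor of size I_1 × ⋯ × I_N, let σ : {1,…,N} → {1,…,K} be a cell map with cell dimensions Ĩ_1,…,Ĩ_K satisfying I_n = Ĩ_{σ(n)}, let λ ∈ ℝ^r and A_k ∈ ℝ^{Ĩ_k × r} for k ∈ {1,…,K}, and let M be the symmetric Kruskal tensor with entries m_i = ∑_{j=1}^r λ_j ∏_{n=1}^N (A_{σ(n)})_{i_n, j}. Let ℓ : ℝ × ℝ → ℝ be such that for every x ∈ ℝ the map m ↦ ℓ(x, m) is differentiable on ℝ with derivative ∂ℓ/∂m(x, m), and define F(λ, A_1,…,A_K) = ∑_i ℓ(x_i, m_i). Then for every k ∈ {1,…,K}, every a ∈ {1,…,Ĩ_k}, and every b ∈ {1,…,r}, the partial derivative of F with respect to the (a,b) entry of A_k exists at (λ, A_1,…,A_K) and equals ∑_{t : σ(t) = k} ∑_{i : i_t = a} y_i · λ_b · ∏_{n ≠ t} (A_{σ(n)})_{i_n,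 b}, where y_i = ∂ℓ/∂m(x_i, m_i) and the inner sum runs over all multi-indices i whose t-th coordinate equals a. -/
/-!
As a function of the perturbed entry `t`, each model entry `m_i` is a weighted sum over columns
of products whose factors are either `t` (column `b`, modes `n` with `σ n = k` and `i_n = a`) or
constant. The product rule differentiates it to `λ_b ∑_n ∏_{p ≠ n} (A_{σ p})_{i_p, b}`, the chain
rule through `ℓ` and summing over `i` give the gradient, and exchanging the sums over `i` and the
mode `n` puts it in the stated form.
-/

open Finset

section

variable {𝕜 : Type*} [NontriviallyNormedField 𝕜]

theorem hasDerivAt_prod_ite {ι : Type*} [DecidableEq ι] (s : Finset ι) (P : ι → Prop)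
    [DecidablePred P] (v : ι → 𝕜) {x : 𝕜} (hv : ∀ n ∈ s, P n → v n = x) :
    HasDerivAt (fun t => ∏ n ∈ s, if P n then t else v n)
      (∑ n ∈ s with P n, ∏ p ∈ s.erase n, v p) x := by
  have hfactor : ∀ n ∈ s, HasDerivAt (fun t => if P n then t else v n)
      (if P n then 1 else 0) x := fun n _ => by
    split_ifs
    · exact hasDerivAt_id x
    · exact hasDerivAt_const x (v n)
  refine (HasDerivAt.fun_finsetProd hfactor).congr_deriv ?_
  rw [sum_filter]
  refine sum_congr rfl fun n hn => ?_
  have hfactor_at : ∀ p ∈ s.erase n, (if P p then x else v p) = v p :=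
    fun p hp => ite_eq_right_iff.mpr fun h => (hv p (mem_of_mem_erase hp) h).symm
  split_ifs <;> simp [prod_congr rfl hfactor_at]

variable {γ ι : Type*} [Fintype γ] [DecidableEq γ] [Fintype ι]
  (c : γ → 𝕜) (v : γ → ι → 𝕜) (P : ι → Prop) [DecidablePred P] (b : γ) {x : 𝕜}

theorem sum_mul_prod_ite_self (hv : ∀ n, P n → v b n = x) :
    ∑ j, c j * ∏ n, (if P n ∧ j = b then x else v j n) = ∑ j, c j * ∏ n, v j n := by
  refine sum_congr rfl fun j _ => congrArg (c j * ·) (prod_congr rfl fun n _ => ?_)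
  exact ite_eq_right_iff.mpr fun ⟨hn, hj⟩ => hj ▸ (hv n hn).symm

theorem hasDerivAt_sum_mul_prod_ite [DecidableEq ι] (hv : ∀ n, P n → v b n = x) :
    HasDerivAt (fun t => ∑ j, c j * ∏ n, if P n ∧ j = b then t else v j n)
      (c b * ∑ n with P n, ∏ p ∈ univ.erase n, v b p) x := by
  have hcolumn : ∀ j ∈ (univ : Finset γ), HasDerivAt
      (fun t => c j * ∏ n, if P n ∧ j = b then t else v j n)
      (c j * ∑ n with P n ∧ j = b, ∏ p ∈ univ.erase n, v j p) x :=
    fun j _ => (hasDerivAt_prod_ite _ _ _ fun n _ ⟨hn, hj⟩ => hj ▸ hv n hn).const_mul (c j)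
  refine (HasDerivAt.fun_sum hcolumn).congr_deriv ?_
  rw [sum_eq_single b (fun j _ hj => by simp [hj]) (absurd (mem_univ b))]
  simp

end

theorem update_entry_apply {κ γ R : Type*} [DecidableEq κ] [DecidableEq γ] {d : κ → ℕ}
    (A : (k : κ) → Fin (d k) → γ → R) (k : κ) (a : Fin (d k)) (b : γ) (t : R)
    (k' : κ) (a' : Fin (d k')) (j : γ) :
    Function.update A k (fun a' b' => if a' = a ∧ b' = b then t else A k a' b') k' a' j =
      if (k' = k ∧ (a' : ℕ) = a) ∧ j = b then t else A k' a' j := by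
  by_cases hk : k' = k
  · subst hk
    simp [Fin.ext_iff]
  · simp [hk]

theorem apply_eq_of_val_eq {κ γ R : Type*} {d : κ → ℕ} (A : (k : κ) → Fin (d k) → γ → R)
    {k k' : κ} {a : Fin (d k)} {a' : Fin (d k')} (hk : k' = k) (ha : (a' : ℕ) = a) (j : γ) :
    A k' a' j = A k a j := by
  subst hk
  rw [Fin.ext ha]

/-- **SymGCP gradient with respect to a factor matrix entry.**
For the SymGCP objective `F = ∑_i ℓ(x_i, m_i)` with the symmetric Kruskal model
`m_i = ∑_j λ_j ∏_n (A_{σ(n)})_{i_n, j}`, for every cell `k`, row `a` and column `b`,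
the partial derivative with respect to the `(a,b)` entry of `A_k` exists and equals
`∑_{t : σ(t) = k} ∑_{i : i_t = a} y_i · λ_b · ∏_{n ≠ t} (A_{σ(n)})_{i_n, b}`
where `y_i = ∂ℓ/∂m (x_i, m_i)`. -/
theorem symgcp_gradient_factor
    (N K r : ℕ) (σ : Fin N → Fin K) (Itil : Fin K → ℕ)
    (X : ((n : Fin N) → Fin (Itil (σ n))) → ℝ)
    (lam : Fin r → ℝ) (A : (k : Fin K) → Fin (Itil k) → Fin r → ℝ)
    (ℓ : ℝ → ℝ → ℝ) (dℓ : ℝ → ℝ → ℝ)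
    (hℓ : ∀ x m : ℝ, HasDerivAt (fun z => ℓ x z) (dℓ x m) m)
    (k : Fin K) (a : Fin (Itil k)) (b : Fin r) :
    HasDerivAt
      (fun t : ℝ => ∑ i : (n : Fin N) → Fin (Itil (σ n)),
        ℓ (X i) (∑ j : Fin r, lam j *
          ∏ n : Fin N,
            (Function.update A k (fun a' b' => if a' = a ∧ b' = b then t else A k a' b'))
              (σ n) (i n) j))
      (∑ t ∈ Finset.univ.filter (fun t : Fin N => σ t = k),
        ∑ i ∈ Finset.univ.filter
            (fun i : (n : Fin N) → Fin (Itil (σ n)) => ((i t : ℕ) = (a : ℕ))),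
          dℓ (X i) (∑ j : Fin r, lam j * ∏ n : Fin N, A (σ n) (i n) j) *
            (lam b * ∏ n ∈ Finset.univ.erase t, A (σ n) (i n) b))
      (A k a b) := by
  simp only [update_entry_apply]
  rw [sum_comm' (t' := univ)
    (s' := fun i => {n | σ n = k ∧ (i n : ℕ) = a}) (by simp [and_comm])]
  simp only [← mul_sum]
  have hentry : ∀ (i : (n : Fin N) → Fin (Itil (σ n))) n,
      σ n = k ∧ (i n : ℕ) = a → A (σ n) (i n) b = A k a b :=
    fun _ _ ⟨hk, ha⟩ => apply_eq_of_val_eq A hk ha b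
  exact HasDerivAt.fun_sum fun i _ => (hℓ _ _).comp_of_eq (A k a b)
    (hasDerivAt_sum_mul_prod_ite lam (fun j n => A (σ n) (i n) j) _ b (hentry i))
    (sum_mul_prod_ite_self lam (fun j n => A (σ n) (i n) j) _ b (hentry i)).symm
end

section
/- Let Y be an N-way real tensor of size I_1 × ⋯ × I_N that is symmetric with respect to a partition of its modes encoded by a cell map σ : {1,…,N} → {1,…,K} with cell dimensions Ĩ_1,…,Ĩ_K satisfying I_n = Ĩ_{σ(n)}, and let A_k ∈ ℝ^{Ĩ_k × r} for k ∈ {1,…,K}. Then for every k ∈ {1,…,K} and every pair of modes u, v with σ(u) = σ(v) = k, the mode-u and mode-v matricized-tensor-times-Khatri-Rao-products agree entrywise: for every a ∈ {1,…,Ĩ_k} and b ∈ {1,…,r}, ∑_{i : i_u = a} y_i ∏_{n ≠ u} (A_{σ(n)})_{i_n, b} = ∑_{i : i_v = a} y_i ∏_{n ≠ v} (A_{σ(n)})_{i_n, b}, where each sum runs over all multi-indices i whose indicated coordinate equals a. -/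
open Finset

private lemma cast_app {K r : ℕ} {Itil : Fin K → ℕ}
    (A : (k : Fin K) → Fin (Itil k) → Fin r → ℝ) {c d : Fin K} (h : c = d)
    (x : Fin (Itil c)) (b : Fin r) :
    A d (Fin.cast (congrArg Itil h) x) b = A c x b := by
  subst h; rfl

/-- **Symmetric MTTKRPs.**
If `Y` is symmetric with respect to the partition encoded by the cell map `σ`
(i.e. invariant under every cell-preserving permutation of its modes), then for any two
modes `u, v` in the same cell `k`, the mode-`u` and mode-`v` MTTKRPs agree entrywise. -/
theorem symmetric_mttkrp
    (N K r : ℕ) (σ : Fin N → Fin K) (Itil : Fin K → ℕ)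
    (Y : ((n : Fin N) → Fin (Itil (σ n))) → ℝ)
    (hY : ∀ (π : Equiv.Perm (Fin N)) (hπ : ∀ n, σ (π n) = σ n)
        (i : (n : Fin N) → Fin (Itil (σ n))),
        Y (fun n => Fin.cast (congrArg Itil (hπ n)) (i (π n))) = Y i)
    (A : (k : Fin K) → Fin (Itil k) → Fin r → ℝ)
    (k : Fin K) (u v : Fin N) (hu : σ u = k) (hv : σ v = k)
    (a : Fin (Itil k)) (b : Fin r) :
    ∑ i ∈ Finset.univ.filter
        (fun i : (n : Fin N) → Fin (Itil (σ n)) => ((i u : ℕ) = (a : ℕ))),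
        Y i * ∏ n ∈ Finset.univ.erase u, A (σ n) (i n) b
    = ∑ i ∈ Finset.univ.filter
        (fun i : (n : Fin N) → Fin (Itil (σ n)) => ((i v : ℕ) = (a : ℕ))),
        Y i * ∏ n ∈ Finset.univ.erase v, A (σ n) (i n) b := by
  set π : Equiv.Perm (Fin N) := Equiv.swap u v with hπdef
  have hπ : ∀ n, σ (π n) = σ n := by
    intro n
    rcases eq_or_ne n u with rfl | hnu
    · simp [π, Equiv.swap_apply_left, hu, hv]
    · rcases eq_or_ne n v with rfl | hnv
      · simp [π, Equiv.swap_apply_right, hu, hv]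
      · simp [π, Equiv.swap_apply_of_ne_of_ne hnu hnv]
  set φ : ((n : Fin N) → Fin (Itil (σ n))) → ((n : Fin N) → Fin (Itil (σ n))) :=
    fun i n => Fin.cast (congrArg Itil (hπ n)) (i (π n)) with hφdef
  have key : ∀ (i : (n : Fin N) → Fin (Itil (σ n))) (n m : Fin N), π n = m →
      ((φ i n : ℕ)) = ((i m : ℕ)) := by
    intro i n m h
    simp only [φ, Fin.coe_cast]
    exact congrArg (fun t => ((i t : ℕ))) h
  refine Finset.sum_nbij' φ φ ?_ ?_ ?_ ?_ ?_
  · intro i hi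
    simp only [Finset.mem_filter, Finset.mem_univ, true_and] at hi ⊢
    rw [key i v u (Equiv.swap_apply_right u v)]
    exact hi
  · intro i hi
    simp only [Finset.mem_filter, Finset.mem_univ, true_and] at hi ⊢
    rw [key i u v (Equiv.swap_apply_left u v)]
    exact hi
  · intro i _
    funext n
    apply Fin.val_injective
    simp only [φ, Fin.coe_cast]
    have : π (π n) = n := Equiv.swap_apply_self u v n
    rw [this]
  · intro i _
    funext n
    apply Fin.val_injective
    simp only [φ, Fin.coe_cast]
    have : π (π n) = n := Equiv.swap_apply_self u v n
    rw [this]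
  · intro i hi
    have hYe : Y (φ i) = Y i := hY π hπ i
    rw [hYe]
    congr 1
    have step : ∀ n, A (σ n) (φ i n) b = A (σ (π n)) (i (π n)) b := by
      intro n
      exact cast_app A (hπ n) (i (π n)) b
    calc ∏ n ∈ Finset.univ.erase u, A (σ n) (i n) b
        = ∏ n ∈ Finset.univ.erase v, A (σ (π n)) (i (π n)) b := by
          refine Finset.prod_nbij' (fun n => π n) (fun n => π n) ?_ ?_ ?_ ?_ ?_
          · intro n hn
            simp only [Finset.mem_erase, Finset.mem_univ, and_true] at hn ⊢
            intro h
            apply hn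
            have : π n = π u := by rw [h, hπdef, Equiv.swap_apply_left]
            exact π.injective this
          · intro n hn
            simp only [Finset.mem_erase, Finset.mem_univ, and_true] at hn ⊢
            intro h
            apply hn
            have : π n = π v := by rw [h, hπdef, Equiv.swap_apply_right]
            exact π.injective this
          · intro n _; exact Equiv.swap_apply_self u v n
          · intro n _; exact Equiv.swap_apply_self u v n
          · intro n _
            have h2 : π (π n) = n := Equiv.swap_apply_self u v n
            conv_lhs => rw [← h2]
      _ = ∏ n ∈ Finset.univ.erase v, A (σ n) (φ i n) b := by
          exact Finset.prod_congr rfl fun n _ => (step n).symm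
end

section
/- Let ι be a finite type, let P ⊆ ι be a nonempty subset whose complement ι∖P is also nonempty, and let p, q be positive integers. Let ζ = (ζ_1,…,ζ_p) be a random tuple distributed uniformly on P^p and, independently, let η = (η_1,…,η_q) be a random tuple distributed uniformly on (ι∖P)^q. For a fixed function y : ι → ℝ, define the random variable Ỹ_i = (|P| / p) · #{w : ζ_w = i} · y(i) for i ∈ P, and Ỹ_i = (|ι∖P| / q) · #{w : η_w = i} · y(i) for i ∈ ι∖P. Then for every i ∈ ι, the expectation of Ỹ_i equals y(i). -/
open Finset

lemma count_sum {ι : Type*} [DecidableEq ι] (S : Finset ι) (n : ℕ) (i : ι) (hi : i ∈ S) :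
    ∑ ζ : Fin n → {x // x ∈ S}, ((Finset.univ.filter fun w : Fin n => (ζ w : ι) = i).card : ℝ)
      = n * (S.card : ℝ) ^ (n - 1) := by
  have h1 : ∀ ζ : Fin n → {x // x ∈ S},
      ((Finset.univ.filter fun w : Fin n => (ζ w : ι) = i).card : ℝ)
      = ∑ w : Fin n, if (ζ w : ι) = i then (1:ℝ) else 0 := by
    intro ζ
    rw [Finset.sum_boole]
  simp_rw [h1]
  rw [Finset.sum_comm]
  have hw : ∀ w : Fin n, ∑ ζ : Fin n → {x // x ∈ S}, (if (ζ w : ι) = i then (1:ℝ) else 0)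
      = (S.card : ℝ) ^ (n-1) := by
    intro w
    have he := Fintype.sum_equiv (Equiv.funSplitAt w {x // x ∈ S})
      (fun ζ : Fin n → {x // x ∈ S} => if (ζ w : ι) = i then (1:ℝ) else 0)
      (fun pr : {x // x ∈ S} × ({j : Fin n // j ≠ w} → {x // x ∈ S}) =>
        if (pr.1 : ι) = i then (1:ℝ) else 0)
      (fun ζ => rfl)
    rw [he, Fintype.sum_prod_type]
    have hconst : ∀ s : {x // x ∈ S},
        ∑ _g : {j : Fin n // j ≠ w} → {x // x ∈ S}, (if ((s : ι) = i) then (1:ℝ) else 0)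
        = (Fintype.card ({j : Fin n // j ≠ w} → {x // x ∈ S}) : ℝ)
          * (if ((s : ι) = i) then (1:ℝ) else 0) := by
      intro s
      rw [Finset.sum_const, Finset.card_univ, nsmul_eq_mul]
    rw [Finset.sum_congr rfl (fun s _ => hconst s), ← Finset.mul_sum]
    have hc : Fintype.card ({j : Fin n // j ≠ w} → {x // x ∈ S}) = S.card ^ (n-1) := by
      rw [Fintype.card_fun, Fintype.card_coe]
      congr 1
      simp [Ne, Fintype.card_subtype_compl]
    have hsum : ∑ s : {x // x ∈ S}, (if ((s : ι) = i) then (1:ℝ) else 0) = 1 := by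
      have h2 : ∀ s : {x // x ∈ S}, ((s : ι) = i) ↔ (s = ⟨i, hi⟩) := by
        intro s; constructor <;> intro h <;> simp_all [Subtype.ext_iff]
      simp_rw [h2]
      simp
    rw [hsum, hc]; push_cast; ring
  rw [Finset.sum_congr rfl (fun w _ => hw w)]
  simp [mul_comm]


/-- **Unbiasedness of stratified sampling.**
A batch of `p` indices is drawn uniformly with replacement from the stratum `P` and,
independently, a batch of `q` indices is drawn uniformly with replacement from the
complementary stratum `Pᶜ`. The estimator `Ỹ_i = (|P|/p) · #{w : ζ_w = i} · y(i)` for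
`i ∈ P` and `Ỹ_i = (|Pᶜ|/q) · #{w : η_w = i} · y(i)` for `i ∉ P` is unbiased: its
expectation (the average over all equally likely batch pairs) equals `y(i)`. -/
theorem stratified_sampling_unbiased
    (ι : Type*) [Fintype ι] [DecidableEq ι]
    (P : Finset ι) (hP : P.Nonempty) (hPc : Pᶜ.Nonempty)
    (p q : ℕ) (hp : 0 < p) (hq : 0 < q) (y : ι → ℝ) (i : ι) :
    (∑ ζ : Fin p → {x // x ∈ P}, ∑ η : Fin q → {x // x ∈ Pᶜ},
        (if i ∈ P then
          ((P.card : ℝ) / (p : ℝ)) *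
            ((Finset.univ.filter (fun w : Fin p => (ζ w : ι) = i)).card : ℝ) * y i
        else
          ((Pᶜ.card : ℝ) / (q : ℝ)) *
            ((Finset.univ.filter (fun w : Fin q => (η w : ι) = i)).card : ℝ) * y i))
      / ((Fintype.card (Fin p → {x // x ∈ P}) : ℝ) *
          (Fintype.card (Fin q → {x // x ∈ Pᶜ}) : ℝ))
    = y i := by
  have hNp : (Fintype.card (Fin p → {x // x ∈ P}) : ℝ) = (P.card : ℝ) ^ p := by
    rw [Fintype.card_fun, Fintype.card_coe, Fintype.card_fin]; push_cast; ring
  have hNq : (Fintype.card (Fin q → {x // x ∈ Pᶜ}) : ℝ) = (Pᶜ.card : ℝ) ^ q := by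
    rw [Fintype.card_fun, Fintype.card_coe, Fintype.card_fin]; push_cast; ring
  have hA : ((P.card : ℝ)) ≠ 0 := by
    have := Finset.card_pos.mpr hP; positivity
  have hB : ((Pᶜ.card : ℝ)) ≠ 0 := by
    have := Finset.card_pos.mpr hPc; positivity
  have hpR : ((p : ℝ)) ≠ 0 := by positivity
  have hqR : ((q : ℝ)) ≠ 0 := by positivity
  by_cases hi : i ∈ P
  · simp only [if_pos hi, Finset.sum_const, Finset.card_univ, nsmul_eq_mul]
    have hs : ∑ ζ : Fin p → {x // x ∈ P},
        ((Fintype.card (Fin q → {x // x ∈ Pᶜ}) : ℝ) *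
          (((P.card : ℝ) / (p : ℝ)) *
            ((Finset.univ.filter (fun w : Fin p => (ζ w : ι) = i)).card : ℝ) * y i))
        = (Fintype.card (Fin q → {x // x ∈ Pᶜ}) : ℝ) * (((P.card : ℝ) / (p : ℝ)) *
            (p * (P.card : ℝ) ^ (p - 1)) * y i) := by
      rw [← Finset.mul_sum]
      congr 1
      rw [← Finset.sum_mul, ← Finset.mul_sum, count_sum P p i hi]
    rw [hs, hNp, hNq]
    have hpow : ((P.card : ℝ)) ^ p = (P.card : ℝ) ^ (p - 1) * (P.card : ℝ) := by
      rw [← pow_succ, Nat.sub_add_cancel hp]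
    rw [hpow]
    have h1 : ((P.card : ℝ)) ^ (p - 1) ≠ 0 := pow_ne_zero _ hA
    have h2 : ((Pᶜ.card : ℝ)) ^ q ≠ 0 := pow_ne_zero _ hB
    field_simp
  · simp only [if_neg hi]
    have hi' : i ∈ Pᶜ := Finset.mem_compl.mpr hi
    have hs : ∑ ζ : Fin p → {x // x ∈ P}, ∑ η : Fin q → {x // x ∈ Pᶜ},
        (((Pᶜ.card : ℝ) / (q : ℝ)) *
            ((Finset.univ.filter (fun w : Fin q => (η w : ι) = i)).card : ℝ) * y i)
        = (Fintype.card (Fin p → {x // x ∈ P}) : ℝ) * (((Pᶜ.card : ℝ) / (q : ℝ)) *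
            (q * (Pᶜ.card : ℝ) ^ (q - 1)) * y i) := by
      rw [Finset.sum_const, Finset.card_univ, nsmul_eq_mul]
      congr 1
      rw [← Finset.sum_mul, ← Finset.mul_sum, count_sum Pᶜ q i hi']
    rw [hs, hNp, hNq]
    have hpow : ((Pᶜ.card : ℝ)) ^ q = (Pᶜ.card : ℝ) ^ (q - 1) * (Pᶜ.card : ℝ) := by
      rw [← pow_succ, Nat.sub_add_cancel hq]
    rw [hpow]
    have h1 : ((Pᶜ.card : ℝ)) ^ (q - 1) ≠ 0 := pow_ne_zero _ hB
    have h2 : ((P.card : ℝ)) ^ p ≠ 0 := pow_ne_zero _ hA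
    field_simp
end
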